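/- arXiv:1704.06072 — 3 statements merged into one kernel-verified Lean document; each statement's English description precedes it below -/
import Mathlib

section
/- For every dimension d ≥ 1 there exists a constant c₁ = c₁(d) > 0 with the following property: for every probability mass function q on ℤ^d (q : ℤ^d → [0,1] with ∑_{x∈ℤ^d} q(x) = 1) whose first moment M := ∑_{x∈ℤ^d} |x| q(x) is finite and satisfies M > 1, the entropy H := ∑_{x∈ℤ^d} q(x) log(1/q(x)) (a sum of nonnegative terms, with the convention 0·log(1/0) = 0) is finite and satisfies M ≥ c₁ e^{H/d}. -/
/-!
Gibbs' inequality against the distribution `p x ∝ exp (-|x| / M)` gives `H ≤ log Z + 1`, where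
`Z = ∑ exp (-|x| / M)` and the `1` is the first moment divided by `M`. Since `|xᵢ| ≤ |x|`, the
weight is dominated by a product of two-sided geometric weights in the coordinates, so
`Z ≤ (1 + 2dM)ᵈ ≤ (3dM)ᵈ`, and hence `exp (H / d) ≤ 3e · dM`.
-/

open Finset Real

theorem hasSum_pi_prod {ι : Type*} {f : ι → ℝ} {s : ℝ} (hf : HasSum f s) (hf0 : ∀ i, 0 ≤ f i)
    (n : ℕ) : HasSum (fun x : Fin n → ι => ∏ k, f (x k)) (s ^ n) := by
  induction n with
  | zero => simp
  | succ n ih =>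
    set g := fun x : Fin n → ι => ∏ k, f (x k)
    have hfg : Summable fun p : ι × (Fin n → ι) => f p.1 * g p.2 :=
      hf.summable.mul_of_nonneg ih.summable hf0 fun x => prod_nonneg fun k _ => hf0 _
    rw [pow_succ', ← (Fin.consEquiv fun _ => ι).hasSum_iff]
    exact (HasSum.mul (f := f) (g := g) hf ih hfg).congr_fun fun p => by
      simp [g, Fin.prod_univ_succ]

theorem hasSum_exp_neg_mul_abs_int {t : ℝ} (ht : 0 < t) :
    HasSum (fun m : ℤ => exp (-(t * |(m : ℝ)|))) (1 + 2 / (exp t - 1)) := by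
  set r := exp (-t) with hr
  have hr1 : r < 1 := exp_lt_one_iff.mpr (neg_lt_zero.mpr ht)
  have hgeo := hasSum_geometric_of_lt_one (exp_pos _).le hr1
  have hpow : ∀ k : ℕ, exp (-(t * k)) = r ^ k := fun k => by rw [← exp_nat_mul]; ring_nf
  have hsum : 1 + 2 / (exp t - 1) = (1 - r)⁻¹ + r * (1 - r)⁻¹ := by
    have : exp t - 1 ≠ 0 := (sub_pos.mpr (one_lt_exp_iff.mpr ht)).ne'
    rw [hr, exp_neg]
    field_simp
    ring
  rw [hsum]
  refine HasSum.of_nat_of_neg_add_one (hgeo.congr_fun fun k => ?_)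
    ((hgeo.mul_left r).congr_fun fun k => ?_)
  · simpa using hpow k
  · rw [← pow_succ', ← hpow]
    push_cast
    rw [abs_neg, abs_of_nonneg (by positivity)]

theorem tsum_exp_neg_mul_abs_int_le {t : ℝ} (ht : 0 < t) :
    ∑' m : ℤ, exp (-(t * |(m : ℝ)|)) ≤ 1 + 2 / t := by
  rw [(hasSum_exp_neg_mul_abs_int ht).tsum_eq]
  gcongr
  linarith [add_one_le_exp t]

theorem abs_le_sqrt_sum_sq {n : ℕ} (x : Fin n → ℝ) (i : Fin n) : |x i| ≤ √(∑ j, x j ^ 2) :=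
  abs_le_sqrt (single_le_sum (fun j _ => sq_nonneg (x j)) (mem_univ i))

theorem exp_neg_mul_sqrt_sum_sq_le_prod {n : ℕ} {t : ℝ} (ht : 0 ≤ t) (x : Fin n → ℝ) :
    exp (-(n * t * √(∑ i, x i ^ 2))) ≤ ∏ i, exp (-(t * |x i|)) := by
  rw [← exp_sum, exp_le_exp, sum_neg_distrib, neg_le_neg_iff, ← mul_sum]
  calc t * ∑ i, |x i| ≤ t * ∑ _i : Fin n, √(∑ j, x j ^ 2) :=
        mul_le_mul_of_nonneg_left (sum_le_sum fun i _ => abs_le_sqrt_sum_sq x i) ht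
    _ = n * t * √(∑ i, x i ^ 2) := by
        rw [sum_const, card_univ, Fintype.card_fin, nsmul_eq_mul]; ring

theorem summable_exp_neg_mul_sqrt_sum_sq_int {n : ℕ} {t : ℝ} (ht : 0 < t) :
    Summable fun x : Fin n → ℤ => exp (-(n * t * √(∑ i, (x i : ℝ) ^ 2))) :=
  (hasSum_pi_prod (hasSum_exp_neg_mul_abs_int ht) (fun _ => (exp_pos _).le) n).summable
    |>.of_nonneg_of_le (fun _ => (exp_pos _).le) fun x =>
      exp_neg_mul_sqrt_sum_sq_le_prod ht.le fun i => (x i : ℝ)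

theorem tsum_exp_neg_mul_sqrt_sum_sq_int_le {n : ℕ} {t : ℝ} (ht : 0 < t) :
    ∑' x : Fin n → ℤ, exp (-(n * t * √(∑ i, (x i : ℝ) ^ 2))) ≤ (1 + 2 / t) ^ n := by
  have hprod := hasSum_pi_prod (hasSum_exp_neg_mul_abs_int ht) (fun _ => (exp_pos _).le) n
  calc ∑' x : Fin n → ℤ, exp (-(n * t * √(∑ i, (x i : ℝ) ^ 2)))
      ≤ ∑' x : Fin n → ℤ, ∏ i, exp (-(t * |(x i : ℝ)|)) :=
        (summable_exp_neg_mul_sqrt_sum_sq_int ht).tsum_le_tsum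
          (fun x => exp_neg_mul_sqrt_sum_sq_le_prod ht.le fun i => (x i : ℝ)) hprod.summable
    _ ≤ (1 + 2 / t) ^ n := by
        rw [hprod.tsum_eq, ← (hasSum_exp_neg_mul_abs_int ht).tsum_eq]
        exact pow_le_pow_left₀ (tsum_nonneg fun _ => (exp_pos _).le)
          (tsum_exp_neg_mul_abs_int_le ht) n

theorem log_tsum_exp_neg_mul_sqrt_sum_sq_int_le {n : ℕ} {t : ℝ} (ht : 0 < t) :
    log (∑' x : Fin n → ℤ, exp (-(n * t * √(∑ i, (x i : ℝ) ^ 2)))) ≤ n * log (1 + 2 / t) := by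
  have hpos : 0 < ∑' x : Fin n → ℤ, exp (-(n * t * √(∑ i, (x i : ℝ) ^ 2))) :=
    (summable_exp_neg_mul_sqrt_sum_sq_int ht).tsum_pos (fun _ => (exp_pos _).le) 0 (exp_pos _)
  rw [← log_pow]
  exact log_le_log hpos (tsum_exp_neg_mul_sqrt_sum_sq_int_le ht)

theorem mul_log_one_div_le {q p : ℝ} (hq : 0 ≤ q) (hp : 0 < p) :
    q * log (1 / q) ≤ p - q + q * log (1 / p) := by
  rcases hq.eq_or_lt with rfl | hq
  · simpa using hp.le
  have : log (p / q) ≤ p / q - 1 := log_le_sub_one_of_pos (by positivity)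
  have hlog : log (1 / q) = log (p / q) + log (1 / p) := by
    rw [log_div hp.ne' hq.ne', one_div, one_div, log_inv, log_inv]; ring
  rw [hlog, mul_add]
  have : q * log (p / q) ≤ p - q := by
    calc q * log (p / q) ≤ q * (p / q - 1) := mul_le_mul_of_nonneg_left this hq.le
      _ = p - q := by field_simp
  linarith

theorem entropy_le_crossEntropy {α : Type*} {q p : α → ℝ} (hq0 : ∀ x, 0 ≤ q x) (hq : HasSum q 1)
    (hp0 : ∀ x, 0 < p x) (hp : HasSum p 1) (hqp : Summable fun x => q x * log (1 / p x)) :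
    Summable (fun x => q x * log (1 / q x)) ∧
      ∑' x, q x * log (1 / q x) ≤ ∑' x, q x * log (1 / p x) := by
  have hbound : HasSum (fun x => p x - q x + q x * log (1 / p x)) (∑' x, q x * log (1 / p x)) := by
    simpa using (hp.sub hq).add hqp.hasSum
  have hnonneg : ∀ x, 0 ≤ q x * log (1 / q x) := fun x => by
    simpa [negMulLog, one_div, log_inv] using
      negMulLog_nonneg (hq0 x) (le_hasSum hq x fun y _ => hq0 y)
  have hle : ∀ x, q x * log (1 / q x) ≤ p x - q x + q x * log (1 / p x) := fun x =>
    mul_log_one_div_le (hq0 x) (hp0 x)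
  have hsum := hbound.summable.of_nonneg_of_le hnonneg hle
  exact ⟨hsum, hbound.tsum_eq ▸ hsum.tsum_le_tsum hle hbound.summable⟩

theorem entropy_le_log_tsum_exp_neg_add {α : Type*} {q E : α → ℝ} (hq0 : ∀ x, 0 ≤ q x)
    (hq : HasSum q 1) (hE : Summable fun x => exp (-E x)) (hEq : Summable fun x => E x * q x) :
    Summable (fun x => q x * log (1 / q x)) ∧
      ∑' x, q x * log (1 / q x) ≤ log (∑' x, exp (-E x)) + ∑' x, E x * q x := by
  set Z := ∑' x, exp (-E x)
  obtain ⟨x₀⟩ : Nonempty α := not_isEmpty_iff.mp fun _ => one_ne_zero (hq.unique hasSum_empty)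
  have hZ : 0 < Z := hE.tsum_pos (fun _ => (exp_pos _).le) x₀ (exp_pos _)
  have hlog : ∀ x, q x * log (1 / (exp (-E x) / Z)) = log Z * q x + E x * q x := fun x => by
    rw [one_div_div, log_div hZ.ne' (exp_pos _).ne', log_exp]; ring
  have hcross : HasSum (fun x => q x * log (1 / (exp (-E x) / Z))) (log Z + ∑' x, E x * q x) := by
    simpa only [mul_one] using ((hq.mul_left (log Z)).add hEq.hasSum).congr_fun hlog
  have hp : HasSum (fun x => exp (-E x) / Z) 1 := by
    have : HasSum (fun x => exp (-E x) / Z) (Z / Z) := hE.hasSum.div_const Z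
    rwa [div_self hZ.ne'] at this
  obtain ⟨hsum, hle⟩ := entropy_le_crossEntropy hq0 hq (fun x => div_pos (exp_pos _) hZ) hp
    hcross.summable
  exact ⟨hsum, hcross.tsum_eq ▸ hle⟩

/-- **Lemma 1 (entropy inequality, after Carleson/Nash).**
For every dimension `d ≥ 1` there is a constant `c₁ = c₁(d) > 0` such that for every
probability mass function `q` on `ℤ^d` whose first moment `M = ∑ |x| q x` (Euclidean norm)
is finite and exceeds `1`, the entropy `H = ∑ q x * log (1 / q x)` is finite and
`M ≥ c₁ * exp (H / d)`. -/
theorem entropy_inequality (d : ℕ) (hd : 1 ≤ d) :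
    ∃ c₁ : ℝ, 0 < c₁ ∧
      ∀ q : (Fin d → ℤ) → ℝ,
        (∀ x, 0 ≤ q x) → (∀ x, q x ≤ 1) → HasSum q 1 →
        Summable (fun x => Real.sqrt (∑ i, (x i : ℝ) ^ 2) * q x) →
        1 < ∑' x, Real.sqrt (∑ i, (x i : ℝ) ^ 2) * q x →
        Summable (fun x => q x * Real.log (1 / q x)) ∧
          c₁ * Real.exp ((∑' x, q x * Real.log (1 / q x)) / d) ≤
            ∑' x, Real.sqrt (∑ i, (x i : ℝ) ^ 2) * q x := by
  have hd₁ : (1 : ℝ) ≤ d := by exact_mod_cast hd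
  refine ⟨(3 * d * exp 1)⁻¹, by positivity, fun q hq0 _ hq hmom hM => ?_⟩
  set M := ∑' x, √(∑ i, (x i : ℝ) ^ 2) * q x
  set t := (d * M)⁻¹
  have hdM : 1 ≤ d * M := by nlinarith
  have ht : 0 < t := by positivity
  have henergy : ∑' x, d * t * √(∑ i, (x i : ℝ) ^ 2) * q x = 1 := by
    calc ∑' x, d * t * √(∑ i, (x i : ℝ) ^ 2) * q x = d * t * M := by
          simp_rw [mul_assoc, tsum_mul_left]
          rfl
      _ = 1 := by simp only [t]; field_simp
  obtain ⟨hsum, hH⟩ := entropy_le_log_tsum_exp_neg_add hq0 hq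
    (summable_exp_neg_mul_sqrt_sum_sq_int ht) (by simpa [mul_assoc] using hmom.mul_left (d * t))
  refine ⟨hsum, ?_⟩
  have hlogZ := log_tsum_exp_neg_mul_sqrt_sum_sq_int_le (n := d) ht
  have hlog3 : log (1 + 2 / t) ≤ log (3 * d * M) :=
    log_le_log (by positivity) (by rw [div_inv_eq_mul]; linarith)
  set H := ∑' x, q x * log (1 / q x)
  have hHd : H / d ≤ log (3 * d * M) + 1 := by
    rw [div_le_iff₀ (by positivity)]
    nlinarith
  rw [inv_mul_le_iff₀ (by positivity)]
  calc exp (H / d) ≤ exp (log (3 * d * M) + 1) := exp_le_exp.mpr hHd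
    _ = 3 * d * exp 1 * M := by rw [exp_add, exp_log (by positivity)]; ring
end

section
/- There exists a universal constant b > 0 with the following property. Let d ≥ 1, s_* > 0, and let q : ℤ^d → (0, ∞) be strictly positive with ∑_{x∈ℤ^d} q(x) = 1. Let s, v : ℤ^d × E → ℝ be bounded families such that for all x ∈ ℤ^d and k ∈ E: v_k(x) = −v_{−k}(x + k) (skew symmetry), ∑_{k∈E} v_k(x) = 0 (divergence-freeness), and s_k(x) ≥ max(s_*, |v_k(x)|). Assume the summability condition ∑_{x∈ℤ^d, k∈E} s_k(x)(q(x+k) + q(x))|log q(x+k) − log q(x)| < ∞. Then (1/2) ∑_{x∈ℤ^d, k∈E} s_k(x)(q(x+k) − q(x))(log q(x+k) − log q(x)) − (1/2) ∑_{x∈ℤ^d, k∈E} v_k(x)(q(x+k) + q(x))(log q(x+k) − log q(x)) ≥ b · s_* · ∑_{x∈ℤ^d, k∈E} ((q(x+k) − q(x))/(q(x+k) + q(x)))² q(x). -/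
open MeasureTheory Filter Finset

noncomputable section

/-- The set `E` of the `2d` signed unit vectors of `ℤ^d`. -/
def unitVecs (d : ℕ) : Finset (Fin d → ℤ) :=
  Finset.image (fun p : Fin d × Bool =>
    fun j => if j = p.1 then (if p.2 then 1 else -1) else 0) Finset.univ

/-! Write `a = q(x+k)`, `c = q(x)`, `u = (a-c)/(a+c)` and `L = log a - log c = log((1+u)/(1-u))`.
Truncating the series `L = 2(u + u³/3 + ⋯)` after its first term (`2u ≤ L ≤ 2u + 2u³/(1-u²)` for
`u ≥ 0`) gives `u² + |L - 2u| ≤ uL`; together with `|v| ≤ s` this bounds the edge term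
`s(a-c)L - v((a+c)L - 2(a-c))` below by `s(a+c)u² ≥ s_* u² c`. The correction terms `2v(a-c)`
sum to zero over all edges: by skew symmetry `∑ v_k(x) q(x+k) = -∑ v_k(x) q(x)`, which vanishes by
divergence-freeness. Hence the bound holds with `b = 1/2`. -/

open Real

lemma neg_mem_unitVecs {d : ℕ} {k : Fin d → ℤ} (hk : k ∈ unitVecs d) : -k ∈ unitVecs d := by
  simp only [unitVecs, Finset.mem_image] at hk ⊢
  obtain ⟨⟨i, b⟩, -, rfl⟩ := hk
  refine ⟨⟨i, !b⟩, Finset.mem_univ _, ?_⟩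
  funext j
  by_cases h : j = i <;> cases b <;> simp [h]

lemma two_mul_le_log_div {u : ℝ} (h0 : 0 ≤ u) (h1 : u < 1) :
    2 * u ≤ log ((1 + u) / (1 - u)) := by
  have h := sum_range_le_log_div h0 h1 1
  norm_num at h
  linarith

lemma one_sub_mul_log_div_le {u : ℝ} (h0 : 0 ≤ u) (h1 : u < 1) :
    (1 - u) * log ((1 + u) / (1 - u)) ≤ 2 * u - u ^ 2 := by
  have h := log_div_le_sum_range_add h0 h1 1
  norm_num at h
  have h1u : 0 < 1 - u := by linarith
  have hcube : 2 * u ^ 3 / (1 + u) ≤ u ^ 2 := by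
    rw [div_le_iff₀ (by linarith)]
    nlinarith [mul_nonneg h0 (sq_nonneg u)]
  calc (1 - u) * log ((1 + u) / (1 - u))
      ≤ (1 - u) * (2 * u + 2 * (u ^ 3 / (1 - u ^ 2))) := by gcongr; linarith
    _ = 2 * u - 2 * u ^ 2 + 2 * u ^ 3 / (1 + u) := by
      rw [show 1 - u ^ 2 = (1 - u) * (1 + u) by ring]
      field_simp
    _ ≤ 2 * u - u ^ 2 := by linarith

lemma sq_add_abs_log_div_sub_le_mul {u : ℝ} (hu : |u| < 1) :
    u ^ 2 + |log ((1 + u) / (1 - u)) - 2 * u| ≤ u * log ((1 + u) / (1 - u)) := by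
  wlog h0 : 0 ≤ u generalizing u
  · have h := this (u := -u) (by rwa [abs_neg]) (by linarith)
    rwa [show (1 + -u) / (1 - -u) = ((1 + u) / (1 - u))⁻¹ by rw [inv_div]; ring_nf, log_inv,
      neg_sq, neg_mul_neg, show -log ((1 + u) / (1 - u)) - 2 * -u =
        -(log ((1 + u) / (1 - u)) - 2 * u) by ring, abs_neg] at h
  have h1 : u < 1 := (abs_lt.1 hu).2
  rw [abs_of_nonneg (sub_nonneg.2 (two_mul_le_log_div h0 h1))]
  linarith [one_sub_mul_log_div_le h0 h1]

lemma mul_sq_mul_le_entropy_production_term {sLow s v a c : ℝ} (ha : 0 < a) (hc : 0 < c)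
    (hsLow : sLow ≤ s) (hv : |v| ≤ s) :
    sLow * (((a - c) / (a + c)) ^ 2 * c) ≤
      s * (a - c) * (log a - log c) - v * (a + c) * (log a - log c) + 2 * (v * (a - c)) := by
  have hac : 0 < a + c := by linarith
  set u := (a - c) / (a + c) with hu_def
  have hsub : a - c = (a + c) * u := by rw [hu_def]; field_simp
  have hu : |u| < 1 := by
    rw [abs_lt]; constructor <;> nlinarith
  have hlog : log ((1 + u) / (1 - u)) = log a - log c := by
    rw [← log_div ha.ne' hc.ne']
    congr 1
    rw [div_eq_div_iff (by linarith [abs_lt.1 hu]) hc.ne']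
    nlinarith
  have key := sq_add_abs_log_div_sub_le_mul hu
  rw [hlog] at key
  set L := log a - log c
  have hvL : v * (L - 2 * u) ≤ s * |L - 2 * u| :=
    (le_abs_self _).trans (by rw [abs_mul]; gcongr)
  have hs : 0 ≤ s := (abs_nonneg v).trans hv
  have hsLow_term : sLow * (u ^ 2 * c) ≤ s * (u ^ 2 * (a + c)) := by
    calc sLow * (u ^ 2 * c) ≤ s * (u ^ 2 * c) := by gcongr
      _ ≤ s * (u ^ 2 * (a + c)) := by gcongr; linarith
  rw [hsub]
  nlinarith [mul_le_mul_of_nonneg_left key (mul_nonneg hs hac.le),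
    mul_le_mul_of_nonneg_left hvL hac.le]

lemma mul_tsum_le_entropy_production_of_summable {ι : Type*} {sLow : ℝ} {p q s v : ι → ℝ}
    (hp : ∀ x, 0 < p x) (hq : ∀ x, 0 < q x) (hqs : Summable q)
    (hs : ∀ x, max sLow |v x| ≤ s x)
    (hsum : Summable fun x ↦ s x * (p x + q x) * |log (p x) - log (q x)|)
    (hD : Summable fun x ↦ v x * (p x - q x)) :
    sLow * ∑' x, ((p x - q x) / (p x + q x)) ^ 2 * q x ≤
      ∑' x, s x * (p x - q x) * (log (p x) - log (q x)) -
        ∑' x, v x * (p x + q x) * (log (p x) - log (q x)) + 2 * ∑' x, v x * (p x - q x) := by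
  have hvs : ∀ x, |v x| ≤ s x := fun x ↦ (le_max_right _ _).trans (hs x)
  have hpq : ∀ x, |p x - q x| ≤ p x + q x := fun x ↦
    (abs_sub _ _).trans_eq (by rw [abs_of_pos (hp x), abs_of_pos (hq x)])
  have hS : Summable fun x ↦ s x * (p x - q x) * (log (p x) - log (q x)) :=
    hsum.of_norm_bounded fun x ↦ by
      rw [Real.norm_eq_abs, abs_mul, abs_mul, abs_of_nonneg ((abs_nonneg _).trans (hvs x))]
      gcongr
      · exact (abs_nonneg _).trans (hvs x)
      · exact hpq x
  have hV : Summable fun x ↦ v x * (p x + q x) * (log (p x) - log (q x)) :=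
    hsum.of_norm_bounded fun x ↦ by
      rw [Real.norm_eq_abs, abs_mul, abs_mul, abs_of_pos (add_pos (hp x) (hq x))]
      exact mul_le_mul_of_nonneg_right
        (mul_le_mul_of_nonneg_right (hvs x) (add_pos (hp x) (hq x)).le) (abs_nonneg _)
  have hF : Summable fun x ↦ ((p x - q x) / (p x + q x)) ^ 2 * q x :=
    hqs.of_norm_bounded fun x ↦ by
      have hden := add_pos (hp x) (hq x)
      rw [Real.norm_eq_abs, abs_of_nonneg (mul_nonneg (sq_nonneg _) (hq x).le)]
      refine mul_le_of_le_one_left (hq x).le ?_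
      rw [sq_le_one_iff_abs_le_one, abs_div, abs_of_pos hden, div_le_one hden]
      exact hpq x
  rw [← tsum_mul_left, ← tsum_mul_left, ← hS.tsum_sub hV, ← (hS.sub hV).tsum_add (hD.mul_left 2)]
  refine (hF.mul_left sLow).tsum_le_tsum (fun x ↦ ?_) ((hS.sub hV).add (hD.mul_left 2))
  exact mul_sq_mul_le_entropy_production_term (hp x) (hq x) ((le_max_left _ _).trans (hs x))
    (hvs x)

lemma Finset.sum_comp_neg_of_neg_mem {G M : Type*} [AddGroup G] [AddCommMonoid M] {E : Finset G}
    (hE : ∀ k ∈ E, -k ∈ E) (f : G → M) : ∑ k ∈ E, f (-k) = ∑ k ∈ E, f k :=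
  Finset.sum_nbij' Neg.neg Neg.neg hE hE (fun k _ ↦ neg_neg k) (fun k _ ↦ neg_neg k)
    fun _ _ ↦ rfl

section SkewFlow

variable {G : Type*} [AddCommGroup G] {E : Finset G} {q : G → ℝ} {v : G → G → ℝ}

lemma summable_mul_comp_add_of_skew (hE : ∀ k ∈ E, -k ∈ E)
    (hskew : ∀ x, ∀ k ∈ E, v x k = -v (x + k) (-k))
    (hvq : ∀ k ∈ E, Summable fun x ↦ v x k * q x) {k : G} (hk : k ∈ E) :
    Summable fun x ↦ v x k * q (x + k) :=
  ((Equiv.addRight k).summable_iff.2 (hvq (-k) (hE k hk))).neg.congr fun x ↦ by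
    simp [hskew x k hk]

lemma tsum_mul_comp_add_of_skew (hskew : ∀ x, ∀ k ∈ E, v x k = -v (x + k) (-k))
    {k : G} (hk : k ∈ E) :
    ∑' x, v x k * q (x + k) = -∑' x, v x (-k) * q x := by
  rw [← tsum_neg, ← (Equiv.addRight k).tsum_eq fun x ↦ -(v x (-k) * q x)]
  exact tsum_congr fun x ↦ by simp [hskew x k hk]

lemma sum_tsum_mul_sub_eq_zero (hE : ∀ k ∈ E, -k ∈ E)
    (hskew : ∀ x, ∀ k ∈ E, v x k = -v (x + k) (-k)) (hdiv : ∀ x, ∑ k ∈ E, v x k = 0)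
    (hvq : ∀ k ∈ E, Summable fun x ↦ v x k * q x) :
    ∑ k ∈ E, ∑' x, v x k * (q (x + k) - q x) = 0 := by
  have hout : ∑ k ∈ E, ∑' x, v x k * q x = 0 := by
    rw [← Summable.tsum_finsetSum hvq]
    simp [← Finset.sum_mul, hdiv]
  have hin : ∑ k ∈ E, ∑' x, v x k * q (x + k) = 0 := by
    rw [Finset.sum_congr rfl fun k hk ↦ tsum_mul_comp_add_of_skew hskew hk,
      Finset.sum_neg_distrib, Finset.sum_comp_neg_of_neg_mem hE (fun k ↦ ∑' x, v x k * q x),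
      hout, neg_zero]
  simp_rw [mul_sub]
  rw [Finset.sum_congr rfl fun k hk ↦
    (summable_mul_comp_add_of_skew hE hskew hvq hk).tsum_sub (hvq k hk),
    Finset.sum_sub_distrib, hin, hout, sub_zero]

lemma mul_sum_tsum_le_entropy_production (hE : ∀ k ∈ E, -k ∈ E) {sLow B : ℝ} {s : G → G → ℝ}
    (hq : ∀ x, 0 < q x) (hqs : Summable q) (hvB : ∀ x, ∀ k ∈ E, |v x k| ≤ B)
    (hskew : ∀ x, ∀ k ∈ E, v x k = -v (x + k) (-k)) (hdiv : ∀ x, ∑ k ∈ E, v x k = 0)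
    (hs : ∀ x, ∀ k ∈ E, max sLow |v x k| ≤ s x k)
    (hsum : ∀ k ∈ E, Summable fun x ↦
      s x k * (q (x + k) + q x) * |log (q (x + k)) - log (q x)|) :
    sLow * ∑ k ∈ E, ∑' x, ((q (x + k) - q x) / (q (x + k) + q x)) ^ 2 * q x ≤
      ∑ k ∈ E, ∑' x, s x k * (q (x + k) - q x) * (log (q (x + k)) - log (q x)) -
        ∑ k ∈ E, ∑' x, v x k * (q (x + k) + q x) * (log (q (x + k)) - log (q x)) := by
  have hvq : ∀ k ∈ E, Summable fun x ↦ v x k * q x := fun k hk ↦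
    (hqs.mul_left B).of_norm_bounded fun x ↦ by
      rw [Real.norm_eq_abs, abs_mul, abs_of_pos (hq x)]
      exact mul_le_mul_of_nonneg_right (hvB x k hk) (hq x).le
  have hD : ∀ k ∈ E, Summable fun x ↦ v x k * (q (x + k) - q x) := fun k hk ↦ by
    simp_rw [mul_sub]
    exact (summable_mul_comp_add_of_skew hE hskew hvq hk).sub (hvq k hk)
  calc sLow * ∑ k ∈ E, ∑' x, ((q (x + k) - q x) / (q (x + k) + q x)) ^ 2 * q x
      ≤ ∑ k ∈ E, (∑' x, s x k * (q (x + k) - q x) * (log (q (x + k)) - log (q x)) -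
          ∑' x, v x k * (q (x + k) + q x) * (log (q (x + k)) - log (q x)) +
            2 * ∑' x, v x k * (q (x + k) - q x)) := by
        rw [Finset.mul_sum]
        exact Finset.sum_le_sum fun k hk ↦ mul_tsum_le_entropy_production_of_summable
          (fun x ↦ hq (x + k)) hq hqs (fun x ↦ hs x k hk) (hsum k hk) (hD k hk)
    _ = _ := by
        rw [Finset.sum_add_distrib, Finset.sum_sub_distrib, ← Finset.mul_sum,
          sum_tsum_mul_sub_eq_zero hE hskew hdiv hvq, mul_zero, add_zero]

end SkewFlow

/-- **Entropy-production lower bound (display (3.3) of the paper).**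
There is a universal `b > 0` such that for any probability mass function `q > 0` on `ℤ^d`
and bounded families `s, v` with `v` skew-symmetric and divergence-free and
`s_k(x) ≥ max(s_*, |v_k(x)|)`, under the natural summability condition, the entropy
production is bounded below by `b · s_*` times the Fisher-entropy-type quantity. -/
theorem entropy_production_lower_bound :
    ∃ b : ℝ, 0 < b ∧
      ∀ (d : ℕ), 1 ≤ d →
      ∀ (sLow : ℝ), 0 < sLow →
      ∀ (q : (Fin d → ℤ) → ℝ)
        (s v : (Fin d → ℤ) → (Fin d → ℤ) → ℝ),
        (∀ x, 0 < q x) → HasSum q 1 →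
        (∃ B : ℝ, ∀ x, ∀ k ∈ unitVecs d, |s x k| ≤ B ∧ |v x k| ≤ B) →
        -- skew symmetry of the flow `v`
        (∀ x, ∀ k ∈ unitVecs d, v x k = -v (x + k) (-k)) →
        -- divergence-freeness of `v`
        (∀ x, ∑ k ∈ unitVecs d, v x k = 0) →
        -- ellipticity and domination of `v` by `s`
        (∀ x, ∀ k ∈ unitVecs d, max sLow |v x k| ≤ s x k) →
        -- summability condition
        (∀ k ∈ unitVecs d, Summable (fun x =>
          s x k * (q (x + k) + q x) * |Real.log (q (x + k)) - Real.log (q x)|)) →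
        b * sLow * ∑ k ∈ unitVecs d, ∑' x,
            ((q (x + k) - q x) / (q (x + k) + q x)) ^ 2 * q x ≤
          (1 / 2) * ∑ k ∈ unitVecs d, ∑' x,
              s x k * (q (x + k) - q x) * (Real.log (q (x + k)) - Real.log (q x)) -
            (1 / 2) * ∑ k ∈ unitVecs d, ∑' x,
              v x k * (q (x + k) + q x) * (Real.log (q (x + k)) - Real.log (q x)) := by
  refine ⟨1 / 2, one_half_pos, fun d _ sLow _ q s v hq hq1 ⟨B, hB⟩ hskew hdiv hs hsum ↦ ?_⟩
  have h := mul_sum_tsum_le_entropy_production (fun _ ↦ neg_mem_unitVecs) hq hq1.summable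
    (fun x k hk ↦ (hB x k hk).2) hskew hdiv hs hsum
  linarith
end
end

section
/- Let 0 < ε ≤ 1 and set α := (2 + ε)/(2 + 2ε) ∈ [3/4, 1). Let t > 0 and let G : (0, t] → [0, ∞) be continuously differentiable with G'(u) + 1/(2u) ≥ 0 for all u ∈ (0, t], and suppose that u ↦ u^{1−α} G'(u) is integrable on (0, t]. Then ∫₀^t (G'(u) + 1/(2u))^α du ≤ 3 t^{1−α} (ε^{−1} + G(t)). -/
/-!
Write `(G' + 1/(2u))^α = (u^(1-α) (G' + 1/(2u)))^α · (u^(-α))^(1-α)` and apply Hölder with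
exponents `1/α` and `1/(1-α)`. Integrating by parts, `∫ u^(1-α) G' ≤ t^(1-α) G(t)`: since `G ≥ 0`,
the boundary term at the left end and the bulk term `∫ (1-α) u^(-α) G` both have the right sign.
Hence `∫ u^(1-α) (G' + 1/(2u)) ≤ t^(1-α) (G(t) + 1/(2(1-α)))`, while `∫ u^(-α) = t^(1-α)/(1-α)`,
and weighted AM–GM turns the product of their powers into a linear bound.
-/

open MeasureTheory Set Filter

section Holder

variable {X : Type*} [MeasurableSpace X] {μ : Measure X} {f g : X → ℝ} {p : ℝ}

theorem MeasureTheory.Integrable.memLp_norm_rpow (hf : Integrable f μ) (hp : 0 < p) :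
    MemLp (fun x => ‖f x‖ ^ p) (ENNReal.ofReal p⁻¹) μ := by
  have h := (memLp_one_iff_integrable.2 hf).norm_rpow_div (ENNReal.ofReal p)
  rwa [ENNReal.toReal_ofReal hp.le, one_div, ← ENNReal.ofReal_inv_of_pos hp] at h

theorem integral_rpow_mul_rpow_one_sub_le (hf : 0 ≤ᵐ[μ] f) (hg : 0 ≤ᵐ[μ] g)
    (hfi : Integrable f μ) (hgi : Integrable g μ) (hp0 : 0 < p) (hp1 : p < 1) :
    ∫ x, f x ^ p * g x ^ (1 - p) ∂μ ≤ (∫ x, f x ∂μ) ^ p * (∫ x, g x ∂μ) ^ (1 - p) := by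
  have hq0 : 0 < 1 - p := by linarith
  have hpq : p⁻¹.HolderConjugate (1 - p)⁻¹ :=
    Real.holderConjugate_iff.2 ⟨one_lt_inv₀ hp0 |>.2 hp1, by simp⟩
  have h := integral_mul_le_Lp_mul_Lq_of_nonneg hpq
    (Eventually.of_forall fun x => by positivity) (Eventually.of_forall fun x => by positivity)
    (hfi.memLp_norm_rpow hp0) (hgi.memLp_norm_rpow hq0)
  simp only [← Real.rpow_mul (norm_nonneg _), mul_inv_cancel₀ hp0.ne', mul_inv_cancel₀ hq0.ne',
    Real.rpow_one, one_div, inv_inv] at h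
  have hnf : (fun x => ‖f x‖) =ᵐ[μ] f := hf.mono fun x hx => Real.norm_of_nonneg hx
  have hng : (fun x => ‖g x‖) =ᵐ[μ] g := hg.mono fun x hx => Real.norm_of_nonneg hx
  have hnfg : (fun x => ‖f x‖ ^ p * ‖g x‖ ^ (1 - p)) =ᵐ[μ] fun x => f x ^ p * g x ^ (1 - p) := by
    filter_upwards [hnf, hng] with x hfx hgx
    rw [hfx, hgx]
  rwa [integral_congr_ae hnf, integral_congr_ae hng, integral_congr_ae hnfg] at h

end Holder

theorem mul_rpow_mul_div_rpow_one_sub_le {T C α : ℝ} (hT : 0 ≤ T) (hC : 0 ≤ C)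
    (hα0 : 0 < α) (hα1 : α < 1) :
    (T * C) ^ α * (T / (1 - α)) ^ (1 - α) ≤ T * (α * C + 1) := by
  have hβ : 0 < 1 - α := by linarith
  have hsplit : (T * C) ^ α * (T / (1 - α)) ^ (1 - α)
      = T * (C ^ α * (1 / (1 - α)) ^ (1 - α)) := by
    rw [div_eq_mul_one_div T, Real.mul_rpow hT hC, Real.mul_rpow hT (by positivity),
      mul_mul_mul_comm, ← Real.rpow_add' hT (by norm_num), add_sub_cancel, Real.rpow_one]
  have amgm := Real.geom_mean_le_arith_mean2_weighted hα0.le hβ.le hC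
    (one_div_pos.2 hβ).le (add_sub_cancel α 1)
  rw [mul_one_div_cancel hβ.ne'] at amgm
  rw [hsplit]
  exact mul_le_mul_of_nonneg_left amgm hT

section IntegrationByParts

variable {G G' : ℝ → ℝ} {β : ℝ}

theorem intervalIntegral_rpow_mul_deriv_le {a b : ℝ} (ha : 0 < a) (hab : a ≤ b) (hβ : 0 ≤ β)
    (hderiv : ∀ u ∈ Icc a b, HasDerivAt G (G' u) u) (hcont : ContinuousOn G' (Icc a b))
    (hG : ∀ u ∈ Icc a b, 0 ≤ G u) :
    ∫ u in a..b, u ^ β * G' u ≤ b ^ β * G b := by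
  have hpos : ∀ u ∈ Icc a b, 0 < u := fun u hu => ha.trans_le hu.1
  have hpow : ∀ u ∈ Icc a b, HasDerivAt (fun u => u ^ β) (β * u ^ (β - 1)) u :=
    fun u hu => Real.hasDerivAt_rpow_const (Or.inl (hpos u hu).ne')
  have hpow' : ContinuousOn (fun u => β * u ^ (β - 1)) (Icc a b) :=
    continuousOn_const.mul (continuousOn_id.rpow_const fun u hu => Or.inl (hpos u hu).ne')
  have hboundary : 0 ≤ a ^ β * G a := mul_nonneg (by positivity) (hG a (left_mem_Icc.2 hab))
  have hbulk : 0 ≤ ∫ u in a..b, β * u ^ (β - 1) * G u :=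
    intervalIntegral.integral_nonneg hab fun u hu =>
      mul_nonneg (mul_nonneg hβ (Real.rpow_nonneg (hpos u hu).le _)) (hG u hu)
  rw [← uIcc_of_le hab] at hderiv hcont hpow hpow'
  rw [intervalIntegral.integral_mul_deriv_eq_deriv_mul hpow hderiv hpow'.intervalIntegrable
    hcont.intervalIntegrable]
  linarith

theorem setIntegral_Ioc_zero_rpow_mul_deriv_le {t : ℝ} (ht : 0 < t) (hβ : 0 ≤ β)
    (hderiv : ∀ u ∈ Ioc 0 t, HasDerivAt G (G' u) u) (hcont : ContinuousOn G' (Ioc 0 t))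
    (hG : ∀ u ∈ Ioc 0 t, 0 ≤ G u) (hint : IntegrableOn (fun u => u ^ β * G' u) (Ioc 0 t)) :
    ∫ u in Ioc 0 t, u ^ β * G' u ≤ t ^ β * G t := by
  have hsub : ∀ {a}, a ∈ Ioc 0 t → Icc a t ⊆ Ioc 0 t := fun ha u hu => ⟨ha.1.trans_le hu.1, hu.2⟩
  have hprim : ContinuousWithinAt (fun a => ∫ u in a..t, u ^ β * G' u) (Ioi 0) 0 := by
    have h := intervalIntegral.continuousOn_primitive_interval_left
      ((integrableOn_Icc_iff_integrableOn_Ioc).2 hint |>.mono_set (uIcc_of_le ht.le).subset) 0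
      left_mem_uIcc
    rw [uIcc_of_le ht.le] at h
    exact continuousWithinAt_Ioi_iff_Ici.2 (h.mono_of_mem_nhdsWithin (Icc_mem_nhdsGE ht))
  rw [← intervalIntegral.integral_of_le ht.le]
  refine le_of_tendsto hprim ?_
  filter_upwards [Ioc_mem_nhdsGT ht] with a ha
  exact intervalIntegral_rpow_mul_deriv_le ha.1 ha.2 hβ (fun u hu => hderiv u (hsub ha hu))
    (hcont.mono (hsub ha)) fun u hu => hG u (hsub ha hu)

end IntegrationByParts

theorem setIntegral_Ioc_zero_rpow_neg {α t : ℝ} (hα : α < 1) (ht : 0 ≤ t) :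
    ∫ u in Ioc 0 t, u ^ (-α) = t ^ (1 - α) / (1 - α) := by
  rw [← intervalIntegral.integral_of_le ht, integral_rpow (Or.inl (by linarith)),
    Real.zero_rpow (by linarith), sub_zero, neg_add_eq_sub]

theorem integrableOn_Ioc_zero_rpow_neg {α t : ℝ} (hα : α < 1) (ht : 0 ≤ t) :
    IntegrableOn (fun u => u ^ (-α)) (Ioc 0 t) :=
  (intervalIntegrable_iff_integrableOn_Ioc_of_le ht).1
    (intervalIntegral.intervalIntegrable_rpow' (by linarith))

theorem rpow_one_sub_mul_add_inv_two_mul {α u : ℝ} (hu : 0 < u) (x : ℝ) :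
    u ^ (1 - α) * (x + 1 / (2 * u)) = u ^ (1 - α) * x + u ^ (-α) / 2 := by
  rw [mul_add, show -α = 1 - α - 1 by ring, Real.rpow_sub_one hu.ne']
  field_simp

theorem rpow_eq_rpow_one_sub_mul_rpow_mul_rpow_neg {α u x : ℝ} (hu : 0 < u) (hx : 0 ≤ x) :
    x ^ α = (u ^ (1 - α) * x) ^ α * (u ^ (-α)) ^ (1 - α) := by
  rw [Real.mul_rpow (by positivity) hx, ← Real.rpow_mul hu.le, ← Real.rpow_mul hu.le,
    mul_right_comm, ← Real.rpow_add hu, show (1 - α) * α + -α * (1 - α) = 0 by ring,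
    Real.rpow_zero, one_mul]

section Nash

variable {α t : ℝ} {G G' : ℝ → ℝ}

theorem integrableOn_Ioc_zero_rpow_mul_add_inv (hα : α < 1) (ht : 0 ≤ t)
    (hint : IntegrableOn (fun u => u ^ (1 - α) * G' u) (Ioc 0 t)) :
    IntegrableOn (fun u => u ^ (1 - α) * (G' u + 1 / (2 * u))) (Ioc 0 t) :=
  (hint.add ((integrableOn_Ioc_zero_rpow_neg hα ht).div_const 2)).congr_fun
    (fun u hu => (rpow_one_sub_mul_add_inv_two_mul hu.1 (G' u)).symm) measurableSet_Ioc

theorem setIntegral_Ioc_zero_rpow_mul_deriv_add_inv_le (hα : α < 1) (ht : 0 < t)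
    (hderiv : ∀ u ∈ Ioc 0 t, HasDerivAt G (G' u) u) (hcont : ContinuousOn G' (Ioc 0 t))
    (hG : ∀ u ∈ Ioc 0 t, 0 ≤ G u)
    (hint : IntegrableOn (fun u => u ^ (1 - α) * G' u) (Ioc 0 t)) :
    ∫ u in Ioc 0 t, u ^ (1 - α) * (G' u + 1 / (2 * u)) ≤
      t ^ (1 - α) * (G t + 1 / (2 * (1 - α))) := by
  have hψ := integrableOn_Ioc_zero_rpow_neg hα ht.le
  have hIBP := setIntegral_Ioc_zero_rpow_mul_deriv_le ht (by linarith) hderiv hcont hG hint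
  rw [setIntegral_congr_fun measurableSet_Ioc fun u hu =>
      rpow_one_sub_mul_add_inv_two_mul hu.1 (G' u),
    integral_add hint (hψ.div_const 2), integral_div, setIntegral_Ioc_zero_rpow_neg hα ht.le]
  have hβ : 1 - α ≠ 0 := by linarith
  calc _ ≤ t ^ (1 - α) * G t + t ^ (1 - α) / (1 - α) / 2 := by linarith
    _ = _ := by field_simp

theorem setIntegral_Ioc_zero_deriv_add_inv_rpow_le (hα0 : 0 < α) (hα1 : α < 1) (ht : 0 < t)
    (hderiv : ∀ u ∈ Ioc 0 t, HasDerivAt G (G' u) u) (hcont : ContinuousOn G' (Ioc 0 t))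
    (hG : ∀ u ∈ Ioc 0 t, 0 ≤ G u) (hpos : ∀ u ∈ Ioc 0 t, 0 ≤ G' u + 1 / (2 * u))
    (hint : IntegrableOn (fun u => u ^ (1 - α) * G' u) (Ioc 0 t)) :
    ∫ u in Ioc 0 t, (G' u + 1 / (2 * u)) ^ α ≤
      t ^ (1 - α) * (α * (G t + 1 / (2 * (1 - α))) + 1) := by
  have hφ_le := setIntegral_Ioc_zero_rpow_mul_deriv_add_inv_le hα1 ht hderiv hcont hG hint
  have hφ_nonneg : 0 ≤ᵐ[volume.restrict (Ioc 0 t)] fun u => u ^ (1 - α) * (G' u + 1 / (2 * u)) :=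
    (ae_restrict_mem measurableSet_Ioc).mono fun u hu =>
      mul_nonneg (Real.rpow_nonneg hu.1.le _) (hpos u hu)
  have hψ_nonneg : 0 ≤ᵐ[volume.restrict (Ioc 0 t)] fun u => u ^ (-α) :=
    (ae_restrict_mem measurableSet_Ioc).mono fun u hu => Real.rpow_nonneg hu.1.le _
  have hG_t : 0 ≤ G t := hG t (right_mem_Ioc.2 ht)
  have hβ : 0 < 1 - α := by linarith
  calc ∫ u in Ioc 0 t, (G' u + 1 / (2 * u)) ^ α
      = ∫ u in Ioc 0 t, (u ^ (1 - α) * (G' u + 1 / (2 * u))) ^ α * (u ^ (-α)) ^ (1 - α) :=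
        setIntegral_congr_fun measurableSet_Ioc fun u hu =>
          rpow_eq_rpow_one_sub_mul_rpow_mul_rpow_neg hu.1 (hpos u hu)
    _ ≤ (∫ u in Ioc 0 t, u ^ (1 - α) * (G' u + 1 / (2 * u))) ^ α *
          (∫ u in Ioc 0 t, u ^ (-α)) ^ (1 - α) :=
        integral_rpow_mul_rpow_one_sub_le hφ_nonneg hψ_nonneg
          (integrableOn_Ioc_zero_rpow_mul_add_inv hα1 ht.le hint)
          (integrableOn_Ioc_zero_rpow_neg hα1 ht.le) hα0 hα1
    _ ≤ (t ^ (1 - α) * (G t + 1 / (2 * (1 - α)))) ^ α * (t ^ (1 - α) / (1 - α)) ^ (1 - α) := by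
        rw [setIntegral_Ioc_zero_rpow_neg hα1 ht.le]
        gcongr
        exact integral_nonneg_of_ae hφ_nonneg
    _ ≤ t ^ (1 - α) * (α * (G t + 1 / (2 * (1 - α))) + 1) :=
        mul_rpow_mul_div_rpow_one_sub_le (by positivity) (by positivity) hα0 hα1

end Nash

/-- **Calculus lemma (final step of the proof of Lemma 3, following Nash).**
Let `0 < ε ≤ 1`, `α := (2+ε)/(2+2ε)`, `t > 0` and let `G` be continuously differentiable
on `(0, t]`, nonnegative there, with `G'(u) + 1/(2u) ≥ 0` and `u ↦ u^(1-α) G'(u)`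
integrable on `(0, t]`.  Then `∫₀^t (G'(u) + 1/(2u))^α du ≤ 3 t^(1-α) (ε⁻¹ + G(t))`. -/
theorem nash_calculus_lemma (ε α t : ℝ) (hε0 : 0 < ε) (hε1 : ε ≤ 1)
    (hα : α = (2 + ε) / (2 + 2 * ε)) (ht : 0 < t)
    (G G' : ℝ → ℝ)
    (hderiv : ∀ u ∈ Ioc (0 : ℝ) t, HasDerivAt G (G' u) u)
    (hcont : ContinuousOn G' (Ioc (0 : ℝ) t))
    (hGnonneg : ∀ u ∈ Ioc (0 : ℝ) t, 0 ≤ G u)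
    (hpos : ∀ u ∈ Ioc (0 : ℝ) t, 0 ≤ G' u + 1 / (2 * u))
    (hint : IntegrableOn (fun u => u ^ (1 - α) * G' u) (Ioc (0 : ℝ) t)) :
    ∫ u in Ioc (0 : ℝ) t, (G' u + 1 / (2 * u)) ^ α ≤
      3 * t ^ (1 - α) * (ε⁻¹ + G t) := by
  have hα0 : 0 < α := by rw [hα]; positivity
  have hα1 : α < 1 := by rw [hα, div_lt_one (by positivity)]; linarith
  have hβ : 1 - α = ε / (2 + 2 * ε) := by rw [hα]; field_simp; ring
  have hβ' : 1 / (2 * (1 - α)) = ε⁻¹ + 1 := by rw [hβ]; field_simp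
  have hG_t : 0 ≤ G t := hGnonneg t (right_mem_Ioc.2 ht)
  have hε : 1 ≤ ε⁻¹ := one_le_inv₀ hε0 |>.2 hε1
  calc ∫ u in Ioc (0 : ℝ) t, (G' u + 1 / (2 * u)) ^ α
      ≤ t ^ (1 - α) * (α * (G t + 1 / (2 * (1 - α))) + 1) :=
        setIntegral_Ioc_zero_deriv_add_inv_rpow_le hα0 hα1 ht hderiv hcont hGnonneg hpos hint
    _ ≤ t ^ (1 - α) * (3 * (ε⁻¹ + G t)) := by
        rw [hβ']
        gcongr
        have := mul_le_of_le_one_left (by positivity : 0 ≤ G t + (ε⁻¹ + 1)) hα1.le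
        linarith
    _ = 3 * t ^ (1 - α) * (ε⁻¹ + G t) := by ring
end
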